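/- Assume f satisfies (f1) and (f2) with constant B ∈ [1,∞), and for ρ > 1 let φ(ρ) be the unique value > s₀ with F(φ(ρ)) = (B/4)·ρ·e^{−ρ+1}. Then for every ε > 0 there exist ρ_ε > 1 and constants c, C > 0 such that for all ρ > ρ_ε: c · ρ^{−(1/B + ε)} ≤ f(φ(ρ)) · F(φ(ρ)) ≤ C · ρ^{−(1/B − ε)}. -/

import Mathlib

open MeasureTheory Filter

/-- `Fint f s = ∫_s^∞ dτ / f(τ)`. -/
noncomputable def Fint (f : ℝ → ℝ) (s : ℝ) : ℝ := ∫ τ in Set.Ioi s, 1 / f τ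

/-- `1/B₁[f](s) = (−log F(s))·(1 − f'(s)·F(s))`, with `G` playing the role of `F`. -/
noncomputable def invB1 (f G : ℝ → ℝ) (s : ℝ) : ℝ :=
  (-Real.log (G s)) * (1 - deriv f s * G s)

/-- `1/B₂[f](s) = f'(s)·F(s)·(log F(s))²·(f(s)·f''(s)·F(s)/f'(s) − 1)`,
with `G` playing the role of `F`. -/
noncomputable def invB2 (f G : ℝ → ℝ) (s : ℝ) : ℝ :=
  deriv f s * G s * (Real.log (G s)) ^ 2 *
    (f s * deriv (deriv f) s * G s / deriv f s - 1)

/-- The model singular solution `v`. -/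
noncomputable def modelv (B t : ℝ) : ℝ :=
  if B = 1 then Real.log (-2 * Real.log t) else (-2 * Real.log t) ^ ((B - 1) / B)

/-- The model nonlinearity `g`. -/
noncomputable def modelg (B s : ℝ) : ℝ :=
  if B = 1 then 4 * Real.exp (Real.exp s - 2 * s)
  else (4 / (B * (B / (B - 1)))) * s ^ (1 - 2 * (B / (B - 1))) * Real.exp (s ^ (B / (B - 1)))

/-- The model function `G(s) = ∫_s^∞ dτ/g(τ)` in closed form. -/
noncomputable def modelG (B s : ℝ) : ℝ :=
  if B = 1 then (1 / 4) * (Real.exp s + 1) * Real.exp (-Real.exp s)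
  else (B / 4) * (s ^ (B / (B - 1)) + 1) * Real.exp (-(s ^ (B / (B - 1))))

/-- The Emden–Fowler model profile `ψ`. -/
noncomputable def modelpsi (B ρ : ℝ) : ℝ :=
  if B = 1 then Real.log (ρ - 1) else (ρ - 1) ^ ((B - 1) / B)

/-!
Write `u = -log F` and `h = f F`, so that `u' = 1 / h` and `h' = f' F - 1`. For every `β`, the
function `W_β = f' F - 1 + β / u` tends to `0` and `W_β' = (1/B₂[f] - β) / (u² h)`. So if
eventually `1/B₂[f] ≤ β`, then `W_β` eventually decreases to `0`, hence `W_β ≥ 0`; if eventually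
`1/B₂[f] ≥ β`, then likewise `W_β ≤ 0`. Since `(h u^β)' = u^β W_β`, the product `h u^β` is then
eventually monotone, giving `u^(-β) ≲ h` for `β > 1/B` and `h ≲ u^(-β)` for `β < 1/B`. Finally,
`u(φ(ρ)) = ρ - 1 - log(B/4) - log ρ` is asymptotic to `ρ`.
-/

open Set Topology

section Fint

variable {f : ℝ → ℝ} {s₀ a b : ℝ}

lemma Fint_eq_integral_Ioc_add (hfint : ∀ s, s₀ < s → IntegrableOn (fun τ => 1 / f τ) (Ioi s))
    (ha : s₀ < a) (hab : a ≤ b) :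
    Fint f a = (∫ τ in Ioc a b, 1 / f τ) + Fint f b := by
  rw [Fint, ← Ioc_union_Ioi_eq_Ioi hab, setIntegral_union (Ioc_disjoint_Ioi le_rfl)
    measurableSet_Ioi ((hfint a ha).mono_set Ioc_subset_Ioi_self) (hfint b (ha.trans_le hab))]
  rfl

lemma Fint_nonneg (hfpos : ∀ s, s₀ < s → 0 < f s) (ha : s₀ < a) : 0 ≤ Fint f a :=
  setIntegral_nonneg measurableSet_Ioi fun τ hτ => (one_div_pos.2 (hfpos τ (ha.trans hτ))).le

lemma strictAntiOn_Fint (hfpos : ∀ s, s₀ < s → 0 < f s)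
    (hfint : ∀ s, s₀ < s → IntegrableOn (fun τ => 1 / f τ) (Ioi s)) :
    StrictAntiOn (Fint f) (Ioi s₀) := by
  intro a ha b _ hab
  have hint : IntervalIntegrable (fun τ => 1 / f τ) volume a b :=
    (intervalIntegrable_iff_integrableOn_Ioc_of_le hab.le).2
      ((hfint a ha).mono_set Ioc_subset_Ioi_self)
  have hpos : 0 < ∫ τ in Ioc a b, 1 / f τ := by
    rw [← intervalIntegral.integral_of_le hab.le]
    exact intervalIntegral.intervalIntegral_pos_of_pos_on hint
      (fun τ hτ => one_div_pos.2 (hfpos τ (ha.trans hτ.1))) hab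
  linarith [Fint_eq_integral_Ioc_add hfint ha hab.le]

lemma Fint_pos (hfpos : ∀ s, s₀ < s → 0 < f s)
    (hfint : ∀ s, s₀ < s → IntegrableOn (fun τ => 1 / f τ) (Ioi s)) (ha : s₀ < a) :
    0 < Fint f a :=
  (Fint_nonneg hfpos (by linarith : s₀ < a + 1)).trans_lt
    (strictAntiOn_Fint hfpos hfint ha (by simp only [mem_Ioi]; linarith) (lt_add_one a))

lemma hasDerivAt_Fint (hfc : ContinuousOn f (Ioi s₀)) (hfpos : ∀ s, s₀ < s → 0 < f s)
    (hfint : ∀ s, s₀ < s → IntegrableOn (fun τ => 1 / f τ) (Ioi s)) (ha : s₀ < a) :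
    HasDerivAt (Fint f) (-(1 / f a)) a := by
  obtain ⟨c, hs₀c, hca⟩ := exists_between ha
  have hcont : ContinuousOn (fun τ => 1 / f τ) (Ioi s₀) :=
    continuousOn_const.div hfc fun τ hτ => (hfpos τ hτ).ne'
  have hint : IntervalIntegrable (fun τ => 1 / f τ) volume c a :=
    (intervalIntegrable_iff_integrableOn_Ioc_of_le hca.le).2
      ((hfint c hs₀c).mono_set Ioc_subset_Ioi_self)
  have hFTC : HasDerivAt (fun x => Fint f c - ∫ τ in c..x, 1 / f τ) (-(1 / f a)) a :=
    (intervalIntegral.integral_hasDerivAt_right hint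
      (hcont.stronglyMeasurableAtFilter isOpen_Ioi a ha)
      (hcont.continuousAt (isOpen_Ioi.mem_nhds ha))).const_sub _
  refine hFTC.congr_of_eventuallyEq ?_
  filter_upwards [Ioi_mem_nhds hca] with x hx
  rw [Fint_eq_integral_Ioc_add hfint hs₀c hx.le, intervalIntegral.integral_of_le hx.le]
  ring

lemma tendsto_Fint_atTop (hfint : ∀ s, s₀ < s → IntegrableOn (fun τ => 1 / f τ) (Ioi s)) :
    Tendsto (Fint f) atTop (𝓝 0) := by
  have hlim := tendsto_const_nhds (x := Fint f (s₀ + 1)).sub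
    (intervalIntegral_tendsto_integral_Ioi (s₀ + 1) (hfint _ (lt_add_one s₀)) tendsto_id)
  rw [← Fint, sub_self] at hlim
  refine hlim.congr' ?_
  filter_upwards [eventually_ge_atTop (s₀ + 1)] with x hx
  rw [Fint_eq_integral_Ioc_add hfint (lt_add_one s₀) hx, id, intervalIntegral.integral_of_le hx]
  ring

end Fint

lemma monotoneOn_Ici_of_hasDerivAt_nonneg {g g' : ℝ → ℝ} {a : ℝ}
    (hg : ∀ x, a ≤ x → HasDerivAt g (g' x) x) (hg' : ∀ x, a ≤ x → 0 ≤ g' x) :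
    MonotoneOn g (Ici a) :=
  monotoneOn_of_hasDerivWithinAt_nonneg (convex_Ici a)
    (fun x hx => (hg x hx).continuousAt.continuousWithinAt)
    (fun x hx => (hg x (interior_subset hx)).hasDerivWithinAt)
    (fun x hx => hg' x (interior_subset hx))

lemma antitoneOn_Ici_of_hasDerivAt_nonpos {g g' : ℝ → ℝ} {a : ℝ}
    (hg : ∀ x, a ≤ x → HasDerivAt g (g' x) x) (hg' : ∀ x, a ≤ x → g' x ≤ 0) :
    AntitoneOn g (Ici a) :=
  antitoneOn_of_hasDerivWithinAt_nonpos (convex_Ici a)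
    (fun x hx => (hg x hx).continuousAt.continuousWithinAt)
    (fun x hx => (hg x (interior_subset hx)).hasDerivWithinAt)
    (fun x hx => hg' x (interior_subset hx))

lemma nonpos_of_hasDerivAt_nonneg_of_tendsto_zero {g g' : ℝ → ℝ} {a x : ℝ}
    (hg : ∀ x, a ≤ x → HasDerivAt g (g' x) x) (hg' : ∀ x, a ≤ x → 0 ≤ g' x)
    (hlim : Tendsto g atTop (𝓝 0)) (hx : a ≤ x) : g x ≤ 0 :=
  ge_of_tendsto hlim <| (eventually_ge_atTop x).mono fun _ hy =>
    monotoneOn_Ici_of_hasDerivAt_nonneg hg hg' hx (hx.trans hy) hy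

lemma nonneg_of_hasDerivAt_nonpos_of_tendsto_zero {g g' : ℝ → ℝ} {a x : ℝ}
    (hg : ∀ x, a ≤ x → HasDerivAt g (g' x) x) (hg' : ∀ x, a ≤ x → g' x ≤ 0)
    (hlim : Tendsto g atTop (𝓝 0)) (hx : a ≤ x) : 0 ≤ g x :=
  le_of_tendsto hlim <| (eventually_ge_atTop x).mono fun _ hy =>
    antitoneOn_Ici_of_hasDerivAt_nonpos hg hg' hx (hx.trans hy) hy

section Derivatives

variable {f : ℝ → ℝ} {s₀ s : ℝ}

lemma tendsto_neg_log_Fint_atTop (hfpos : ∀ s, s₀ < s → 0 < f s)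
    (hfint : ∀ s, s₀ < s → IntegrableOn (fun τ => 1 / f τ) (Ioi s)) :
    Tendsto (fun s => -Real.log (Fint f s)) atTop atTop := by
  have hF : Tendsto (Fint f) atTop (𝓝[>] 0) := tendsto_nhdsWithin_iff.2
    ⟨tendsto_Fint_atTop hfint, (eventually_gt_atTop s₀).mono fun _ hs => Fint_pos hfpos hfint hs⟩
  exact tendsto_neg_atBot_atTop.comp (Real.tendsto_log_nhdsGT_zero.comp hF)

lemma hasDerivAt_neg_log_Fint (hfc : ContinuousOn f (Ioi s₀)) (hfpos : ∀ s, s₀ < s → 0 < f s)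
    (hfint : ∀ s, s₀ < s → IntegrableOn (fun τ => 1 / f τ) (Ioi s)) (hs : s₀ < s) :
    HasDerivAt (fun t => -Real.log (Fint f t)) (1 / (f s * Fint f s)) s := by
  refine ((hasDerivAt_Fint hfc hfpos hfint hs).log (Fint_pos hfpos hfint hs).ne').neg.congr_deriv ?_
  field_simp

lemma hasDerivAt_mul_Fint (hfc : ContinuousOn f (Ioi s₀)) (hfpos : ∀ s, s₀ < s → 0 < f s)
    (hfint : ∀ s, s₀ < s → IntegrableOn (fun τ => 1 / f τ) (Ioi s)) (hs : s₀ < s)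
    (hfd : DifferentiableAt ℝ f s) :
    HasDerivAt (fun t => f t * Fint f t) (deriv f s * Fint f s - 1) s := by
  refine (hfd.hasDerivAt.mul (hasDerivAt_Fint hfc hfpos hfint hs)).congr_deriv ?_
  field_simp [(hfpos s hs).ne']
  ring

lemma hasDerivAt_deriv_mul_Fint_sub_one_add_div (hfc : ContinuousOn f (Ioi s₀))
    (hfpos : ∀ s, s₀ < s → 0 < f s)
    (hfint : ∀ s, s₀ < s → IntegrableOn (fun τ => 1 / f τ) (Ioi s)) (hs : s₀ < s)
    (hf's : deriv f s ≠ 0) (hf'd : DifferentiableAt ℝ (deriv f) s)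
    (hlog : Real.log (Fint f s) ≠ 0) (β : ℝ) :
    HasDerivAt (fun t => deriv f t * Fint f t - 1 + β / (-Real.log (Fint f t)))
      ((invB2 f (Fint f) s - β) / ((-Real.log (Fint f s)) ^ 2 * (f s * Fint f s))) s := by
  have hu : -Real.log (Fint f s) ≠ 0 := neg_ne_zero.2 hlog
  refine (((hf'd.hasDerivAt.mul (hasDerivAt_Fint hfc hfpos hfint hs)).sub_const 1).add
    ((hasDerivAt_const s β).div (hasDerivAt_neg_log_Fint hfc hfpos hfint hs) hu)).congr_deriv ?_
  unfold invB2
  field_simp [(hfpos s hs).ne', (Fint_pos hfpos hfint hs).ne']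
  ring

lemma hasDerivAt_mul_Fint_mul_rpow (hfc : ContinuousOn f (Ioi s₀))
    (hfpos : ∀ s, s₀ < s → 0 < f s)
    (hfint : ∀ s, s₀ < s → IntegrableOn (fun τ => 1 / f τ) (Ioi s)) (hs : s₀ < s)
    (hfd : DifferentiableAt ℝ f s) (hu : 0 < -Real.log (Fint f s)) (β : ℝ) :
    HasDerivAt (fun t => f t * Fint f t * (-Real.log (Fint f t)) ^ β)
      ((-Real.log (Fint f s)) ^ β * (deriv f s * Fint f s - 1 + β / (-Real.log (Fint f s)))) s := by
  refine ((hasDerivAt_mul_Fint hfc hfpos hfint hs hfd).mul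
    ((hasDerivAt_neg_log_Fint hfc hfpos hfint hs).rpow_const (Or.inl hu.ne'))).congr_deriv ?_
  rw [Real.rpow_sub_one hu.ne']
  field_simp [(hfpos s hs).ne', (Fint_pos hfpos hfint hs).ne']

lemma tendsto_deriv_mul_Fint_sub_one_add_div (hfpos : ∀ s, s₀ < s → 0 < f s)
    (hfint : ∀ s, s₀ < s → IntegrableOn (fun τ => 1 / f τ) (Ioi s))
    (hf2a : Tendsto (fun s => deriv f s * Fint f s) atTop (𝓝 1)) (β : ℝ) :
    Tendsto (fun s => deriv f s * Fint f s - 1 + β / (-Real.log (Fint f s))) atTop (𝓝 0) := by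
  simpa using (hf2a.sub_const 1).add ((tendsto_neg_log_Fint_atTop hfpos hfint).const_div_atTop β)

end Derivatives

lemma ContDiffOn.differentiableAt_and_differentiableAt_deriv {f : ℝ → ℝ} {U : Set ℝ} {s : ℝ}
    (hf : ContDiffOn ℝ 2 f U) (hU : IsOpen U) (hs : s ∈ U) :
    DifferentiableAt ℝ f s ∧ DifferentiableAt ℝ (deriv f) s :=
  ⟨(hf.differentiableOn (by norm_num)).differentiableAt (hU.mem_nhds hs),
    ((hf.deriv_of_isOpen (m := 1) hU (by norm_num)).differentiableOn one_ne_zero).differentiableAt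
      (hU.mem_nhds hs)⟩

section Bounds

variable {f : ℝ → ℝ} {s₀ β : ℝ}

theorem exists_pos_mul_rpow_neg_log_Fint_le (hf : ContDiffOn ℝ 2 f (Ioi s₀))
    (hfpos : ∀ s, s₀ < s → 0 < f s) (hf' : ∀ s, s₀ < s → deriv f s ≠ 0)
    (hfint : ∀ s, s₀ < s → IntegrableOn (fun τ => 1 / f τ) (Ioi s))
    (hf2a : Tendsto (fun s => deriv f s * Fint f s) atTop (𝓝 1))
    (hβ : ∀ᶠ s in atTop, invB2 f (Fint f) s ≤ β) :
    ∃ c > 0, ∀ᶠ s in atTop, c * (-Real.log (Fint f s)) ^ (-β) ≤ f s * Fint f s := by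
  obtain ⟨s₁, hs₁⟩ := eventually_atTop.1 ((eventually_gt_atTop s₀).and
    (((tendsto_neg_log_Fint_atTop hfpos hfint).eventually_gt_atTop 0).and hβ))
  have hd x (hx : s₁ ≤ x) := hf.differentiableAt_and_differentiableAt_deriv isOpen_Ioi (hs₁ x hx).1
  have hW x (hx : s₁ ≤ x) : 0 ≤ deriv f x * Fint f x - 1 + β / (-Real.log (Fint f x)) :=
    nonneg_of_hasDerivAt_nonpos_of_tendsto_zero
      (g := fun t => deriv f t * Fint f t - 1 + β / (-Real.log (Fint f t)))
      (fun y hy => hasDerivAt_deriv_mul_Fint_sub_one_add_div hf.continuousOn hfpos hfint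
        (hs₁ y hy).1 (hf' y (hs₁ y hy).1) (hd y hy).2 (neg_ne_zero.1 (hs₁ y hy).2.1.ne') β)
      (fun y hy => div_nonpos_of_nonpos_of_nonneg (sub_nonpos.2 (hs₁ y hy).2.2)
        (mul_nonneg (sq_nonneg _) (mul_pos (hfpos y (hs₁ y hy).1)
          (Fint_pos hfpos hfint (hs₁ y hy).1)).le))
      (tendsto_deriv_mul_Fint_sub_one_add_div hfpos hfint hf2a β) hx
  have hmono : MonotoneOn (fun t => f t * Fint f t * (-Real.log (Fint f t)) ^ β) (Ici s₁) :=
    monotoneOn_Ici_of_hasDerivAt_nonneg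
      (fun x hx => hasDerivAt_mul_Fint_mul_rpow hf.continuousOn hfpos hfint (hs₁ x hx).1
        (hd x hx).1 (hs₁ x hx).2.1 β)
      (fun x hx => mul_nonneg (Real.rpow_nonneg (hs₁ x hx).2.1.le β) (hW x hx))
  obtain ⟨hs₀₁, hu₁, -⟩ := hs₁ s₁ le_rfl
  refine ⟨f s₁ * Fint f s₁ * (-Real.log (Fint f s₁)) ^ β,
    mul_pos (mul_pos (hfpos s₁ hs₀₁) (Fint_pos hfpos hfint hs₀₁)) (Real.rpow_pos_of_pos hu₁ β), ?_⟩
  filter_upwards [eventually_ge_atTop s₁] with s hs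
  have hu := (hs₁ s hs).2.1
  rw [Real.rpow_neg hu.le, ← div_eq_mul_inv, div_le_iff₀ (Real.rpow_pos_of_pos hu β)]
  exact hmono self_mem_Ici hs hs

theorem exists_pos_mul_Fint_le_mul_rpow_neg_log_Fint (hf : ContDiffOn ℝ 2 f (Ioi s₀))
    (hfpos : ∀ s, s₀ < s → 0 < f s) (hf' : ∀ s, s₀ < s → deriv f s ≠ 0)
    (hfint : ∀ s, s₀ < s → IntegrableOn (fun τ => 1 / f τ) (Ioi s))
    (hf2a : Tendsto (fun s => deriv f s * Fint f s) atTop (𝓝 1))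
    (hβ : ∀ᶠ s in atTop, β ≤ invB2 f (Fint f) s) :
    ∃ C > 0, ∀ᶠ s in atTop, f s * Fint f s ≤ C * (-Real.log (Fint f s)) ^ (-β) := by
  obtain ⟨s₁, hs₁⟩ := eventually_atTop.1 ((eventually_gt_atTop s₀).and
    (((tendsto_neg_log_Fint_atTop hfpos hfint).eventually_gt_atTop 0).and hβ))
  have hd x (hx : s₁ ≤ x) := hf.differentiableAt_and_differentiableAt_deriv isOpen_Ioi (hs₁ x hx).1
  have hW x (hx : s₁ ≤ x) : deriv f x * Fint f x - 1 + β / (-Real.log (Fint f x)) ≤ 0 :=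
    nonpos_of_hasDerivAt_nonneg_of_tendsto_zero
      (g := fun t => deriv f t * Fint f t - 1 + β / (-Real.log (Fint f t)))
      (fun y hy => hasDerivAt_deriv_mul_Fint_sub_one_add_div hf.continuousOn hfpos hfint
        (hs₁ y hy).1 (hf' y (hs₁ y hy).1) (hd y hy).2 (neg_ne_zero.1 (hs₁ y hy).2.1.ne') β)
      (fun y hy => div_nonneg (sub_nonneg.2 (hs₁ y hy).2.2)
        (mul_nonneg (sq_nonneg _) (mul_pos (hfpos y (hs₁ y hy).1)
          (Fint_pos hfpos hfint (hs₁ y hy).1)).le))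
      (tendsto_deriv_mul_Fint_sub_one_add_div hfpos hfint hf2a β) hx
  have hanti : AntitoneOn (fun t => f t * Fint f t * (-Real.log (Fint f t)) ^ β) (Ici s₁) :=
    antitoneOn_Ici_of_hasDerivAt_nonpos
      (fun x hx => hasDerivAt_mul_Fint_mul_rpow hf.continuousOn hfpos hfint (hs₁ x hx).1
        (hd x hx).1 (hs₁ x hx).2.1 β)
      (fun x hx => mul_nonpos_of_nonneg_of_nonpos (Real.rpow_nonneg (hs₁ x hx).2.1.le β) (hW x hx))
  obtain ⟨hs₀₁, hu₁, -⟩ := hs₁ s₁ le_rfl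
  refine ⟨f s₁ * Fint f s₁ * (-Real.log (Fint f s₁)) ^ β,
    mul_pos (mul_pos (hfpos s₁ hs₀₁) (Fint_pos hfpos hfint hs₀₁)) (Real.rpow_pos_of_pos hu₁ β), ?_⟩
  filter_upwards [eventually_ge_atTop s₁] with s hs
  have hu := (hs₁ s hs).2.1
  rw [Real.rpow_neg hu.le, ← div_eq_mul_inv, le_div_iff₀ (Real.rpow_pos_of_pos hu β)]
  exact hanti self_mem_Ici hs hs

end Bounds

lemma tendsto_atTop_of_tendsto_Fint_comp {α : Type*} {l : Filter α} {f : ℝ → ℝ} {φ : α → ℝ}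
    {s₀ : ℝ} (hfpos : ∀ s, s₀ < s → 0 < f s)
    (hfint : ∀ s, s₀ < s → IntegrableOn (fun τ => 1 / f τ) (Ioi s))
    (hφ : ∀ᶠ ρ in l, s₀ < φ ρ) (hF : Tendsto (fun ρ => Fint f (φ ρ)) l (𝓝 0)) :
    Tendsto φ l atTop := by
  refine tendsto_atTop.2 fun b => ?_
  have hb : s₀ < max b (s₀ + 1) := (lt_add_one s₀).trans_le (le_max_right _ _)
  filter_upwards [hφ, hF.eventually_lt_const (Fint_pos hfpos hfint hb)] with ρ hρ hlt
  exact (le_max_left _ _).trans ((strictAntiOn_Fint hfpos hfint).lt_iff_gt hρ hb |>.1 hlt).le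

lemma tendsto_mul_mul_exp_neg_add_one (a : ℝ) :
    Tendsto (fun ρ => a * ρ * Real.exp (-ρ + 1)) atTop (𝓝 0) := by
  have h := (Real.tendsto_pow_mul_exp_neg_atTop_nhds_zero 1).const_mul (a * Real.exp 1)
  rw [mul_zero] at h
  refine h.congr fun ρ => ?_
  rw [pow_one, neg_add_eq_sub, Real.exp_sub, Real.exp_neg]
  field_simp

lemma tendsto_neg_log_mul_mul_exp_neg_add_one_div_self {a : ℝ} (ha : a ≠ 0) :
    Tendsto (fun ρ => -Real.log (a * ρ * Real.exp (-ρ + 1)) / ρ) atTop (𝓝 1) := by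
  have h := (tendsto_const_nhds (x := (1 : ℝ)).sub
    (tendsto_id.const_div_atTop (1 + Real.log a))).sub
    Real.isLittleO_log_id_atTop.tendsto_div_nhds_zero
  rw [sub_zero, sub_zero] at h
  refine h.congr' ((eventually_gt_atTop 0).mono fun ρ hρ => ?_)
  dsimp only [id]
  rw [Real.log_mul (mul_ne_zero ha hρ.ne') (Real.exp_ne_zero _), Real.log_mul ha hρ.ne',
    Real.log_exp]
  field_simp
  ring

section RpowComparison

variable {g u : ℝ → ℝ} {β : ℝ}

lemma eventually_rpow_le_two_mul_rpow (hu : Tendsto (fun x => u x / x) atTop (𝓝 1)) (β : ℝ) :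
    ∀ᶠ x in atTop, u x ^ β ≤ 2 * x ^ β ∧ x ^ β ≤ 2 * u x ^ β := by
  have hlim : Tendsto (fun x => (u x / x) ^ β) atTop (𝓝 1) := by
    simpa using hu.rpow_const (Or.inl one_ne_zero)
  filter_upwards [eventually_gt_atTop 0, hu.eventually_const_lt one_pos,
    hlim.eventually_lt_const one_lt_two, hlim.eventually_const_lt one_half_lt_one]
    with x hx hux hlt hgt
  have hxβ := Real.rpow_pos_of_pos hx β
  rw [Real.div_rpow ((div_pos_iff_of_pos_right hx).1 hux).le hx.le] at hlt hgt
  rw [div_lt_iff₀ hxβ] at hlt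
  rw [lt_div_iff₀ hxβ] at hgt
  constructor <;> linarith

lemma eventually_half_mul_rpow_le {c : ℝ} (hc : 0 < c)
    (hu : Tendsto (fun x => u x / x) atTop (𝓝 1)) (hg : ∀ᶠ x in atTop, c * u x ^ β ≤ g x) :
    ∀ᶠ x in atTop, c / 2 * x ^ β ≤ g x := by
  filter_upwards [hg, eventually_rpow_le_two_mul_rpow hu β] with x hx hux
  nlinarith [hux.2]

lemma eventually_le_two_mul_mul_rpow {C : ℝ} (hC : 0 < C)
    (hu : Tendsto (fun x => u x / x) atTop (𝓝 1)) (hg : ∀ᶠ x in atTop, g x ≤ C * u x ^ β) :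
    ∀ᶠ x in atTop, g x ≤ 2 * C * x ^ β := by
  filter_upwards [hg, eventually_rpow_le_two_mul_rpow hu β] with x hx hux
  nlinarith [hux.1]

end RpowComparison

theorem stmt10_general (f φ : ℝ → ℝ) (s₀ B : ℝ)
    (hf : ContDiffOn ℝ 2 f (Set.Ioi s₀))
    (hfpos : ∀ s, s₀ < s → 0 < f s)
    (hf' : ∀ s, s₀ < s → 0 < deriv f s)
    (hfint : ∀ s, s₀ < s → IntegrableOn (fun τ => 1 / f τ) (Set.Ioi s))
    (hf2a : Tendsto (fun s => deriv f s * Fint f s) atTop (nhds 1))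
    (hf2b : Tendsto (fun s => invB2 f (Fint f) s) atTop (nhds (1 / B)))
    (hφ : ∀ ρ > (1 : ℝ), s₀ < φ ρ ∧ Fint f (φ ρ) = (B / 4) * ρ * Real.exp (-ρ + 1)) :
    ∀ ε > (0 : ℝ), ∃ ρε > (1 : ℝ), ∃ c > (0 : ℝ), ∃ C > (0 : ℝ), ∀ ρ > ρε,
      c * ρ ^ (-(1 / B + ε)) ≤ f (φ ρ) * Fint f (φ ρ)
      ∧ f (φ ρ) * Fint f (φ ρ) ≤ C * ρ ^ (-(1 / B - ε)) := by
  intro ε hε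
  have hB : B / 4 ≠ 0 := by
    rintro hB
    simpa [(hφ 2 one_lt_two).2, hB] using Fint_pos hfpos hfint (hφ 2 one_lt_two).1
  have hFφ : (fun ρ => B / 4 * ρ * Real.exp (-ρ + 1)) =ᶠ[atTop] fun ρ => Fint f (φ ρ) :=
    (eventually_gt_atTop 1).mono fun ρ hρ => (hφ ρ hρ).2.symm
  have hφtop : Tendsto φ atTop atTop := tendsto_atTop_of_tendsto_Fint_comp hfpos hfint
    ((eventually_gt_atTop 1).mono fun ρ hρ => (hφ ρ hρ).1)
    ((tendsto_mul_mul_exp_neg_add_one _).congr' hFφ)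
  have hratio : Tendsto (fun ρ => -Real.log (Fint f (φ ρ)) / ρ) atTop (𝓝 1) :=
    (tendsto_neg_log_mul_mul_exp_neg_add_one_div_self hB).congr'
      (hFφ.mono fun ρ hρ => by simp only [hρ])
  have hf'ne s (hs : s₀ < s) := (hf' s hs).ne'
  obtain ⟨c, hc, hlow⟩ := exists_pos_mul_rpow_neg_log_Fint_le (β := 1 / B + ε / 2) hf hfpos
    hf'ne hfint hf2a (hf2b.eventually (ge_mem_nhds (by linarith)))
  obtain ⟨C, hC, hupp⟩ := exists_pos_mul_Fint_le_mul_rpow_neg_log_Fint (β := 1 / B - ε / 2) hf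
    hfpos hf'ne hfint hf2a (hf2b.eventually (le_mem_nhds (by linarith)))
  obtain ⟨ρ₀, hρ₀⟩ := eventually_atTop.1
    (((eventually_half_mul_rpow_le hc hratio (hφtop.eventually hlow)).and
      (eventually_le_two_mul_mul_rpow hC hratio (hφtop.eventually hupp))).and
        (eventually_ge_atTop 1))
  refine ⟨max ρ₀ 2, one_lt_two.trans_le (le_max_right _ _), c / 2, by positivity, 2 * C,
    by positivity, fun ρ hρ => ?_⟩
  obtain ⟨⟨hL, hU⟩, hρ1⟩ := hρ₀ ρ ((le_max_left _ _).trans hρ.le)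
  exact ⟨le_trans (by gcongr; linarith) hL, hU.trans (by gcongr; linarith)⟩

/-- Lemma (fF decay): for every `ε > 0` there are `ρ_ε > 1` and `c, C > 0` with
`c·ρ^{−(1/B+ε)} ≤ f(φ(ρ))F(φ(ρ)) ≤ C·ρ^{−(1/B−ε)}` for all `ρ > ρ_ε`. -/
theorem stmt10 (f φ : ℝ → ℝ) (s₀ B : ℝ) (hs₀ : 0 < s₀)
    (hf : ContDiffOn ℝ 2 f (Set.Ioi s₀))
    (hfpos : ∀ s, s₀ < s → 0 < f s)
    (hf' : ∀ s, s₀ < s → 0 < deriv f s)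
    (hfint : ∀ s, s₀ < s → IntegrableOn (fun τ => 1 / f τ) (Set.Ioi s))
    (hB : 1 ≤ B)
    (hf2a : Tendsto (fun s => deriv f s * Fint f s) atTop (nhds 1))
    (hf2b : Tendsto (fun s => invB2 f (Fint f) s) atTop (nhds (1 / B)))
    (hφ : ∀ ρ > (1 : ℝ), s₀ < φ ρ ∧ Fint f (φ ρ) = (B / 4) * ρ * Real.exp (-ρ + 1)) :
    ∀ ε > (0 : ℝ), ∃ ρε > (1 : ℝ), ∃ c > (0 : ℝ), ∃ C > (0 : ℝ), ∀ ρ > ρε,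
      c * ρ ^ (-(1 / B + ε)) ≤ f (φ ρ) * Fint f (φ ρ)
      ∧ f (φ ρ) * Fint f (φ ρ) ≤ C * ρ ^ (-(1 / B - ε)) :=
  stmt10_general f φ s₀ B hf hfpos hf' hfint hf2a hf2b hφ
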